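/- arXiv:2402.17327 — 3 statements merged into one kernel-verified Lean document; each statement's English description precedes it below -/
import Mathlib

section
/- Under the (z,Λ)-well-behaved assumption, if each sample X is drawn with probability p_e = (ℓ̂(e) + Λ_e·v(e)) / (Φ^Λ(D) + Σ_{x∈D} ℓ̂(x)) and assigned value ℓ(e)/(s·p_e), then the second moment satisfies E[X²] ≤ (1/s²)·(2Φ^Λ(D) + Σ_{e∈D} ℓ(e))², where Φ^Λ(D) = Σ_i Λ_i·Σ_{e∈C_i} ‖e − c_i‖^z. -/
/-- second moment bound for sensitivity sampling. -/
theorem stmt7 {d k : ℕ} (D : Finset (EuclideanSpace ℝ (Fin d)))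
    (σ : EuclideanSpace ℝ (Fin d) → Fin k) (c : Fin k → EuclideanSpace ℝ (Fin d))
    (ℓ : EuclideanSpace ℝ (Fin d) → ℝ) (Λ : Fin k → ℝ) (z : ℝ) (hz : 0 < z)
    (hΛ : ∀ i, 0 ≤ Λ i) (hℓ0 : ∀ e, 0 ≤ ℓ e)
    (hH : ∀ e ∈ D, |ℓ e - ℓ (c (σ e))| ≤ Λ (σ e) * ‖e - c (σ e)‖ ^ z)
    (s : ℕ) (hs : 0 < s)
    (p : EuclideanSpace ℝ (Fin d) → ℝ)
    (hden : 0 < (∑ e ∈ D, Λ (σ e) * ‖e - c (σ e)‖ ^ z) + ∑ e ∈ D, ℓ (c (σ e)))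
    (hp : ∀ e ∈ D, p e =
      (ℓ (c (σ e)) + Λ (σ e) * ‖e - c (σ e)‖ ^ z) /
        ((∑ x ∈ D, Λ (σ x) * ‖x - c (σ x)‖ ^ z) + ∑ x ∈ D, ℓ (c (σ x))))
    (hppos : ∀ e ∈ D, 0 < p e) :
    ∑ e ∈ D, p e * (ℓ e / ((s : ℝ) * p e)) ^ 2 ≤
      (1 / (s : ℝ) ^ 2) *
        (2 * (∑ e ∈ D, Λ (σ e) * ‖e - c (σ e)‖ ^ z) + ∑ e ∈ D, ℓ e) ^ 2 := by
  set Φ := ∑ e ∈ D, Λ (σ e) * ‖e - c (σ e)‖ ^ z with hΦdef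
  set Lhat := ∑ e ∈ D, ℓ (c (σ e)) with hLhatdef
  set L := ∑ e ∈ D, ℓ e with hLdef
  have hs' : (0:ℝ) < (s:ℝ) := by exact_mod_cast hs
  have hΦ0 : 0 ≤ Φ := Finset.sum_nonneg fun e _ =>
    mul_nonneg (hΛ _) (Real.rpow_nonneg (norm_nonneg _) z)
  have hL0 : 0 ≤ L := Finset.sum_nonneg fun e _ => hℓ0 e
  -- ℓ e ≤ numerator
  have hnum : ∀ e ∈ D, ℓ e ≤ ℓ (c (σ e)) + Λ (σ e) * ‖e - c (σ e)‖ ^ z := by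
    intro e he
    have := hH e he
    have h1 : ℓ e - ℓ (c (σ e)) ≤ Λ (σ e) * ‖e - c (σ e)‖ ^ z :=
      le_trans (le_abs_self _) this
    linarith
  -- L ≤ Φ + Lhat
  have hLle : L ≤ Φ + Lhat := by
    have : L ≤ ∑ e ∈ D, (ℓ (c (σ e)) + Λ (σ e) * ‖e - c (σ e)‖ ^ z) :=
      Finset.sum_le_sum hnum
    rw [Finset.sum_add_distrib] at this
    linarith
  -- Lhat ≤ Φ + L, so Φ + Lhat ≤ 2Φ + L
  have hLhatle : Lhat ≤ Φ + L := by
    have h : ∀ e ∈ D, ℓ (c (σ e)) ≤ ℓ e + Λ (σ e) * ‖e - c (σ e)‖ ^ z := by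
      intro e he
      have h1 : ℓ (c (σ e)) - ℓ e ≤ Λ (σ e) * ‖e - c (σ e)‖ ^ z := by
        have := hH e he
        have h2 := abs_le.1 this
        linarith [h2.1]
      linarith
    have : Lhat ≤ ∑ e ∈ D, (ℓ e + Λ (σ e) * ‖e - c (σ e)‖ ^ z) :=
      Finset.sum_le_sum h
    rw [Finset.sum_add_distrib] at this
    linarith
  -- key pointwise bound
  have key : ∀ e ∈ D, p e * (ℓ e / ((s : ℝ) * p e)) ^ 2 ≤ ℓ e * (Φ + Lhat) / (s:ℝ)^2 := by
    intro e he
    have hpe := hppos e he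
    have hpd : p e * (Φ + Lhat) = ℓ (c (σ e)) + Λ (σ e) * ‖e - c (σ e)‖ ^ z := by
      rw [hp e he]
      field_simp
    have hle : ℓ e ≤ p e * (Φ + Lhat) := by rw [hpd]; exact hnum e he
    have hlhs : p e * (ℓ e / ((s : ℝ) * p e)) ^ 2 = ℓ e ^ 2 / ((s:ℝ)^2 * p e) := by
      field_simp
    rw [hlhs, div_le_div_iff₀ (by positivity) (by positivity)]
    have h2 : ℓ e * ℓ e ≤ ℓ e * (p e * (Φ + Lhat)) :=
      mul_le_mul_of_nonneg_left hle (hℓ0 e)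
    nlinarith [sq_nonneg (s:ℝ)]
  calc ∑ e ∈ D, p e * (ℓ e / ((s : ℝ) * p e)) ^ 2
      ≤ ∑ e ∈ D, ℓ e * (Φ + Lhat) / (s:ℝ)^2 := Finset.sum_le_sum key
    _ = L * (Φ + Lhat) / (s:ℝ)^2 := by rw [← Finset.sum_div, ← Finset.sum_mul]
    _ ≤ (1 / (s : ℝ) ^ 2) * (2 * Φ + L) ^ 2 := by
        rw [div_eq_mul_one_div, mul_comm]
        apply mul_le_mul_of_nonneg_left _ (by positivity)
        nlinarith
end

section
/- Under the sensitivity sampling distribution p_e = (ℓ̂(e) + Λ_e·v(e)) / (Φ^Λ(D) + Σ_x ℓ̂(x)) with weights w(e) = 1/(s·p_e), the maximum weighted loss satisfies max_{e∈D} ℓ(e)·w(e) ≤ (1/s)·(2Φ^Λ(D) + Σ_{e∈D} ℓ(e)). -/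
/-- maximum weighted loss bound for sensitivity sampling. -/
theorem stmt8 {d k : ℕ} (D : Finset (EuclideanSpace ℝ (Fin d)))
    (σ : EuclideanSpace ℝ (Fin d) → Fin k) (c : Fin k → EuclideanSpace ℝ (Fin d))
    (ℓ : EuclideanSpace ℝ (Fin d) → ℝ) (Λ : Fin k → ℝ) (z : ℝ) (hz : 0 < z)
    (hΛ : ∀ i, 0 ≤ Λ i) (hℓ0 : ∀ e, 0 ≤ ℓ e)
    (hH : ∀ e ∈ D, |ℓ e - ℓ (c (σ e))| ≤ Λ (σ e) * ‖e - c (σ e)‖ ^ z)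
    (s : ℕ) (hs : 0 < s)
    (p : EuclideanSpace ℝ (Fin d) → ℝ)
    (hden : 0 < (∑ e ∈ D, Λ (σ e) * ‖e - c (σ e)‖ ^ z) + ∑ e ∈ D, ℓ (c (σ e)))
    (hp : ∀ e ∈ D, p e =
      (ℓ (c (σ e)) + Λ (σ e) * ‖e - c (σ e)‖ ^ z) /
        ((∑ x ∈ D, Λ (σ x) * ‖x - c (σ x)‖ ^ z) + ∑ x ∈ D, ℓ (c (σ x))))
    (hppos : ∀ e ∈ D, 0 < p e) :
    ∀ e ∈ D, ℓ e * (1 / ((s : ℝ) * p e)) ≤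
      (1 / (s : ℝ)) *
        (2 * (∑ x ∈ D, Λ (σ x) * ‖x - c (σ x)‖ ^ z) + ∑ x ∈ D, ℓ x) := by

  intro e he
  set Φ := ∑ x ∈ D, Λ (σ x) * ‖x - c (σ x)‖ ^ z with hΦ
  set L := ∑ x ∈ D, ℓ (c (σ x)) with hLdef
  have hpe := hp e he
  have hnum_pos : 0 < ℓ (c (σ e)) + Λ (σ e) * ‖e - c (σ e)‖ ^ z := by
    have h := hppos e he
    rw [hpe] at h
    rcases div_pos_iff.mp h with ⟨h1, _⟩ | ⟨_, h2⟩
    · exact h1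
    · linarith
  have hle : ℓ e ≤ ℓ (c (σ e)) + Λ (σ e) * ‖e - c (σ e)‖ ^ z := by
    have := abs_le.mp (hH e he)
    linarith [this.2]
  have hLle : L ≤ Φ + ∑ x ∈ D, ℓ x := by
    rw [hLdef, hΦ, ← Finset.sum_add_distrib]
    apply Finset.sum_le_sum
    intro x hx
    have := abs_le.mp (hH x hx)
    linarith [this.1]
  have key : ℓ e / p e ≤ Φ + L := by
    rw [hpe, div_div_eq_mul_div, div_le_iff₀ hnum_pos]
    nlinarith [hℓ0 e, hden]
  have hpepos := hppos e he
  have hs' : (0:ℝ) < s := Nat.cast_pos.mpr hs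
  calc ℓ e * (1 / ((s:ℝ) * p e)) = (1/(s:ℝ)) * (ℓ e / p e) := by
        field_simp
    _ ≤ (1/(s:ℝ)) * (Φ + L) := by
        apply mul_le_mul_of_nonneg_left key; positivity
    _ ≤ (1/(s:ℝ)) * (2 * Φ + ∑ x ∈ D, ℓ x) := by
        apply mul_le_mul_of_nonneg_left _ (by positivity)
        linarith
end

section
/- Let ε > 0 and suppose D is a finite dataset with a clustering C_1,...,C_k such that the nonnegative loss ℓ is (z,Λ)-well-behaved. Sampling s = ⌈ε^{-2}(2 + 2ε/3)⌉ points i.i.d. from the sensitivity distribution p_e = (ℓ̂(e)+Λ_e v(e))/(Φ^Λ(D)+Σ_x ℓ̂(x)) with weights w(e) = 1/(s·p_e) yields, with probability at least 1 − e^{-1}, |Σ_{e∈D} ℓ(e) − Σ_{e∈S} w(e)·ℓ(e)| ≤ ε·(Σ_{e∈D} ℓ(e) + 2Φ^Λ(D)). -/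
lemma sum_prod_fn {α : Type*} [Fintype α] {n : ℕ} (F : Fin n → α → ℝ) :
    ∑ ω : Fin n → α, ∏ t, F t (ω t) = ∏ t, ∑ a, F t a := by
  rw [Finset.prod_univ_sum, Fintype.piFinset_univ]

lemma var_lemma {α : Type*} [Fintype α] {n : ℕ} (p g : α → ℝ)
    (h1 : ∑ a, p a = 1) (h0 : ∑ a, p a * g a = 0) :
    ∑ ω : Fin n → α, (∏ t, p (ω t)) * (∑ t, g (ω t)) ^ 2
      = n * ∑ a, p a * g a ^ 2 := by
  have key : ∀ t t' : Fin n,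
      (∑ ω : Fin n → α, (∏ u, p (ω u)) * (g (ω t) * g (ω t')))
        = if t = t' then ∑ a, p a * g a ^ 2 else 0 := by
    intro t t'
    have hpt : ∀ ω : Fin n → α, (∏ u, p (ω u)) * (g (ω t) * g (ω t'))
        = ∏ u, (p (ω u) * (if u = t then g (ω u) else 1) *
            (if u = t' then g (ω u) else 1)) := by
      intro ω
      rw [Finset.prod_mul_distrib, Finset.prod_mul_distrib]
      rw [Finset.prod_ite_eq' Finset.univ t (fun u => g (ω u))]
      rw [Finset.prod_ite_eq' Finset.univ t' (fun u => g (ω u))]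
      simp [mul_assoc]
    rw [Finset.sum_congr rfl (fun ω _ => hpt ω),
      sum_prod_fn (fun u a => (p a * if u = t then g a else 1) * if u = t' then g a else 1)]
    by_cases h : t = t'
    · subst h
      have : ∀ u : Fin n, (∑ a, p a * (if u = t then g a else 1) *
          (if u = t then g a else 1)) = if u = t then (∑ a, p a * g a ^ 2) else 1 := by
        intro u
        by_cases hu : u = t <;> simp [hu, h1, sq, mul_assoc]
      rw [Finset.prod_congr rfl (fun u _ => this u)]
      simp
    · simp only [if_neg h]
      apply Finset.prod_eq_zero (Finset.mem_univ t)
      simp [h, h0]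
  calc ∑ ω : Fin n → α, (∏ t, p (ω t)) * (∑ t, g (ω t)) ^ 2
      = ∑ ω : Fin n → α, ∑ t : Fin n, ∑ t' : Fin n,
          (∏ u, p (ω u)) * (g (ω t) * g (ω t')) := by
        apply Finset.sum_congr rfl; intro ω _
        rw [sq, Finset.sum_mul_sum, Finset.mul_sum]
        apply Finset.sum_congr rfl; intro t _
        rw [Finset.mul_sum]
    _ = ∑ t : Fin n, ∑ t' : Fin n, ∑ ω : Fin n → α,
          (∏ u, p (ω u)) * (g (ω t) * g (ω t')) := by
        rw [Finset.sum_comm]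
        apply Finset.sum_congr rfl; intro t _
        rw [Finset.sum_comm]
    _ = ∑ t : Fin n, ∑ t' : Fin n, if t = t' then (∑ a, p a * g a ^ 2) else 0 := by
        exact Finset.sum_congr rfl fun t _ => Finset.sum_congr rfl fun t' _ => key t t'
    _ = n * ∑ a, p a * g a ^ 2 := by
        simp [Finset.sum_ite_eq]

set_option maxHeartbeats 1000000 in
open Classical in
/-- Theorem 1, main theorem: sensitivity sampling with
`s = ⌈ε⁻²(2 + 2ε/3)⌉` i.i.d. samples yields, with probability at least `1 − e⁻¹`, an
estimator of the total loss with error at most `ε(Σℓ + 2Φ^Λ)`. -/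
theorem stmt9 {d k : ℕ} (ε : ℝ) (hε : 0 < ε)
    (D : Finset (EuclideanSpace ℝ (Fin d)))
    (σ : EuclideanSpace ℝ (Fin d) → Fin k) (c : Fin k → EuclideanSpace ℝ (Fin d))
    (ℓ : EuclideanSpace ℝ (Fin d) → ℝ) (Λ : Fin k → ℝ) (z : ℝ) (hz : 0 < z)
    (hΛ : ∀ i, 0 ≤ Λ i) (hℓ0 : ∀ e, 0 ≤ ℓ e)
    (hH : ∀ e ∈ D, |ℓ e - ℓ (c (σ e))| ≤ Λ (σ e) * ‖e - c (σ e)‖ ^ z)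
    (s : ℕ) (hs : s = ⌈ε⁻¹ ^ 2 * (2 + 2 * ε / 3)⌉₊)
    (p : EuclideanSpace ℝ (Fin d) → ℝ)
    (hden : 0 < (∑ e ∈ D, Λ (σ e) * ‖e - c (σ e)‖ ^ z) + ∑ e ∈ D, ℓ (c (σ e)))
    (hp : ∀ e ∈ D, p e =
      (ℓ (c (σ e)) + Λ (σ e) * ‖e - c (σ e)‖ ^ z) /
        ((∑ x ∈ D, Λ (σ x) * ‖x - c (σ x)‖ ^ z) + ∑ x ∈ D, ℓ (c (σ x))))
    (hppos : ∀ e ∈ D, 0 < p e) :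
    1 - Real.exp (-1) ≤
      ∑ ω ∈ Finset.univ.filter (fun ω : Fin s → {x // x ∈ D} =>
          |∑ e ∈ D, ℓ e - ∑ t : Fin s, (1 / ((s : ℝ) * p (ω t : EuclideanSpace ℝ (Fin d)))) *
              ℓ (ω t : EuclideanSpace ℝ (Fin d))| ≤
            ε * ((∑ e ∈ D, ℓ e) + 2 * ∑ e ∈ D, Λ (σ e) * ‖e - c (σ e)‖ ^ z)),
        ∏ t : Fin s, p (ω t : EuclideanSpace ℝ (Fin d)) := by
  classical
  set Φ := ∑ e ∈ D, Λ (σ e) * ‖e - c (σ e)‖ ^ z with hΦ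
  set Lh := ∑ e ∈ D, ℓ (c (σ e)) with hLh
  set L := ∑ e ∈ D, ℓ e with hL
  set M := Φ + Lh with hM
  set q : EuclideanSpace ℝ (Fin d) → ℝ :=
    fun e => ℓ (c (σ e)) + Λ (σ e) * ‖e - c (σ e)‖ ^ z with hqdef
  -- basic facts
  have hv0 : ∀ e : EuclideanSpace ℝ (Fin d), 0 ≤ Λ (σ e) * ‖e - c (σ e)‖ ^ z := by
    intro e
    exact mul_nonneg (hΛ _) (Real.rpow_nonneg (norm_nonneg _) _)
  have hΦ0 : 0 ≤ Φ := Finset.sum_nonneg fun e _ => hv0 e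
  have hL0 : 0 ≤ L := Finset.sum_nonneg fun e _ => hℓ0 e
  have hq0 : ∀ e, 0 ≤ q e := fun e => add_nonneg (hℓ0 _) (hv0 e)
  have hlq : ∀ e ∈ D, ℓ e ≤ q e := by
    intro e he
    have := (abs_le.mp (hH e he)).2
    simp only [hqdef]; linarith
  have hqlM : ∀ e ∈ D, q e - 2 * (Λ (σ e) * ‖e - c (σ e)‖ ^ z) ≤ ℓ e := by
    intro e he
    have := (abs_le.mp (hH e he)).1
    simp only [hqdef]; linarith
  have hqsum : ∑ e ∈ D, q e = M := by
    simp only [hqdef, hM, hΦ, hLh]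
    rw [Finset.sum_add_distrib]; ring
  have hpq : ∀ e ∈ D, p e = q e / M := fun e he => hp e he
  have hsump : ∑ e ∈ D, p e = 1 := by
    rw [Finset.sum_congr rfl hpq, ← Finset.sum_div, hqsum, div_self (ne_of_gt hden)]
  have hqpos : ∀ e ∈ D, 0 < q e := by
    intro e he
    have := hppos e he
    rw [hpq e he] at this
    exact (div_pos_iff.mp this).resolve_right
      (fun h => absurd hden (not_lt.mpr (le_of_lt h.2))) |>.1
  have hLM : L ≤ M := by
    rw [← hqsum, hL]; exact Finset.sum_le_sum hlq
  have hML : M - L ≤ 2 * Φ := by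
    have : ∑ e ∈ D, (q e - 2 * (Λ (σ e) * ‖e - c (σ e)‖ ^ z)) ≤ L :=
      Finset.sum_le_sum hqlM
    rw [Finset.sum_sub_distrib, hqsum, ← Finset.mul_sum] at this
    simp only [hΦ] at this ⊢
    linarith
  -- s bounds
  have hs_le : ε⁻¹ ^ 2 * (2 + 2 * ε / 3) ≤ (s : ℝ) := by
    rw [hs]; exact Nat.le_ceil _
  have hinv : ε⁻¹ ^ 2 * ε ^ 2 = 1 := by field_simp
  have hsε2 : 2 ≤ (s : ℝ) * ε ^ 2 := by
    nlinarith [mul_le_mul_of_nonneg_right hs_le (sq_nonneg ε)]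
  have hspos : (0 : ℝ) < s := by nlinarith [sq_nonneg ε]
  have hsne : (s : ℝ) ≠ 0 := ne_of_gt hspos
  -- subtype setup
  set f : {x // x ∈ D} → ℝ :=
    fun a => (1 / ((s : ℝ) * p (a : EuclideanSpace ℝ (Fin d)))) *
      ℓ (a : EuclideanSpace ℝ (Fin d)) with hf
  set g : {x // x ∈ D} → ℝ := fun a => f a - L / s with hg
  set p' : {x // x ∈ D} → ℝ := fun a => p (a : EuclideanSpace ℝ (Fin d)) with hp'
  have h1 : ∑ a : {x // x ∈ D}, p' a = 1 := by
    rw [hp']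
    rw [Finset.sum_coe_sort D (fun e => p e)]
    exact hsump
  have hm : ∑ a : {x // x ∈ D}, p' a * f a = L / s := by
    have step : ∀ a : {x // x ∈ D}, p' a * f a =
        ℓ (a : EuclideanSpace ℝ (Fin d)) / s := by
      intro a
      have hpa := hppos a a.2
      simp only [hp', hf]
      field_simp
    rw [Finset.sum_congr rfl (fun a _ => step a)]
    rw [Finset.sum_coe_sort D (fun e => ℓ e / s), ← Finset.sum_div, ← hL]
  have h0 : ∑ a : {x // x ∈ D}, p' a * g a = 0 := by
    have step : ∀ a : {x // x ∈ D}, p' a * g a =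
        p' a * f a - (L / s) * p' a := by intro a; simp only [hg]; ring
    rw [Finset.sum_congr rfl (fun a _ => step a), Finset.sum_sub_distrib,
      ← Finset.mul_sum, h1, hm]
    ring
  -- variance bound
  have hpf2 : ∑ a : {x // x ∈ D}, p' a * f a ^ 2 ≤ M * L / (s : ℝ) ^ 2 := by
    have step : ∀ a : {x // x ∈ D}, p' a * f a ^ 2 ≤
        M * ℓ (a : EuclideanSpace ℝ (Fin d)) / (s : ℝ) ^ 2 := by
      intro a
      have hpa := hppos a a.2
      have hqa := hqpos a a.2
      have hla := hlq a a.2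
      have hl0a := hℓ0 (a : EuclideanSpace ℝ (Fin d))
      have e1 : p' a * f a ^ 2 =
          ℓ (a : EuclideanSpace ℝ (Fin d)) ^ 2 / ((s : ℝ) ^ 2 * p (a : EuclideanSpace ℝ (Fin d))) := by
        simp only [hp', hf]
        field_simp
      rw [e1, hpq a a.2]
      rw [div_le_div_iff₀ (by positivity) (by positivity)]
      have h2 : ℓ (a : EuclideanSpace ℝ (Fin d)) * ℓ (a : EuclideanSpace ℝ (Fin d)) ≤
          ℓ (a : EuclideanSpace ℝ (Fin d)) * q (a : EuclideanSpace ℝ (Fin d)) :=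
        mul_le_mul_of_nonneg_left hla hl0a
      calc ℓ (a : EuclideanSpace ℝ (Fin d)) ^ 2 * (s : ℝ) ^ 2
          = (ℓ (a : EuclideanSpace ℝ (Fin d)) * ℓ (a : EuclideanSpace ℝ (Fin d))) * (s : ℝ) ^ 2 := by
            ring
        _ ≤ (ℓ (a : EuclideanSpace ℝ (Fin d)) * q (a : EuclideanSpace ℝ (Fin d))) * (s : ℝ) ^ 2 :=
            mul_le_mul_of_nonneg_right h2 (sq_nonneg _)
        _ = M * ℓ (a : EuclideanSpace ℝ (Fin d)) *
            ((s : ℝ) ^ 2 * (q (a : EuclideanSpace ℝ (Fin d)) / M)) := by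
            field_simp
    calc ∑ a : {x // x ∈ D}, p' a * f a ^ 2
        ≤ ∑ a : {x // x ∈ D}, M * ℓ (a : EuclideanSpace ℝ (Fin d)) / (s : ℝ) ^ 2 :=
          Finset.sum_le_sum fun a _ => step a
      _ = M * L / (s : ℝ) ^ 2 := by
          rw [Finset.sum_coe_sort D (fun e => M * ℓ e / (s : ℝ) ^ 2)]
          rw [← Finset.sum_div, ← Finset.mul_sum, ← hL]
  have hpg2 : ∑ a : {x // x ∈ D}, p' a * g a ^ 2 ≤ L * (M - L) / (s : ℝ) ^ 2 := by
    have expand : ∀ a : {x // x ∈ D}, p' a * g a ^ 2 =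
        p' a * f a ^ 2 - 2 * (L / s) * (p' a * f a) + (L / s) ^ 2 * p' a := by
      intro a; simp only [hg]; ring
    rw [Finset.sum_congr rfl (fun a _ => expand a), Finset.sum_add_distrib,
      Finset.sum_sub_distrib, ← Finset.mul_sum, ← Finset.mul_sum, h1, hm]
    have : L * (M - L) / (s : ℝ) ^ 2 = M * L / (s : ℝ) ^ 2 - 2 * (L/s) * (L/s) + (L/s)^2 * 1 := by
      field_simp; ring
    rw [this]
    linarith [hpf2]
  -- total mass is 1
  set P : (Fin s → {x // x ∈ D}) → ℝ :=
    fun ω => ∏ t, p (ω t : EuclideanSpace ℝ (Fin d)) with hP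
  have htot : ∑ ω : Fin s → {x // x ∈ D}, P ω = 1 := by
    rw [hP, sum_prod_fn (fun (_ : Fin s) (a : {x // x ∈ D}) => p (a : EuclideanSpace ℝ (Fin d)))]
    have : ∀ t : Fin s, (∑ a : {x // x ∈ D}, p (a : EuclideanSpace ℝ (Fin d))) = 1 := fun t => h1
    rw [Finset.prod_congr rfl (fun t _ => this t), Finset.prod_const_one]
  have hP0 : ∀ ω : Fin s → {x // x ∈ D}, 0 ≤ P ω := by
    intro ω
    exact Finset.prod_nonneg fun t _ => (hppos _ (ω t).2).le
  -- total variance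
  have hvar : ∑ ω : Fin s → {x // x ∈ D}, P ω * (∑ t, g (ω t)) ^ 2
      = (s : ℝ) * ∑ a : {x // x ∈ D}, p' a * g a ^ 2 := by
    exact var_lemma p' g h1 h0
  -- deviation rewrite
  have hdev : ∀ ω : Fin s → {x // x ∈ D},
      (L - ∑ t, f (ω t)) ^ 2 = (∑ t, g (ω t)) ^ 2 := by
    intro ω
    have : ∑ t : Fin s, g (ω t) = (∑ t, f (ω t)) - L := by
      simp only [hg]
      rw [Finset.sum_sub_distrib, Finset.sum_const, Finset.card_univ, Fintype.card_fin,
        nsmul_eq_mul]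
      field_simp
    rw [this]; ring
  set E : (Fin s → {x // x ∈ D}) → Prop := fun ω =>
    |L - ∑ t, f (ω t)| ≤ ε * (L + 2 * Φ) with hE
  show 1 - Real.exp (-1) ≤ ∑ ω ∈ Finset.univ.filter E, P ω
  have hexp8 : (1 : ℝ) / 8 ≤ Real.exp (-1) := by
    have h8e : Real.exp 1 ≤ 8 := by nlinarith [Real.exp_one_lt_d9]
    calc (1 : ℝ) / 8 ≤ 1 / Real.exp 1 :=
          one_div_le_one_div_of_le (Real.exp_pos 1) h8e
      _ = Real.exp (-1) := by rw [Real.exp_neg, one_div]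
  by_cases hcase : 0 < L + 2 * Φ
  · -- main case: Chebyshev
    set t0 : ℝ := ε * (L + 2 * Φ) with ht0
    have ht0pos : 0 < t0 := mul_pos hε hcase
    have hsplit : (∑ ω ∈ Finset.univ.filter E, P ω)
        + ∑ ω ∈ Finset.univ.filter (fun ω => ¬ E ω), P ω = 1 := by
      rw [Finset.sum_filter_add_sum_filter_not]; exact htot
    have hFnn : 0 ≤ ∑ ω ∈ Finset.univ.filter (fun ω => ¬ E ω), P ω :=
      Finset.sum_nonneg fun ω _ => hP0 ω
    have cheb : t0 ^ 2 * ∑ ω ∈ Finset.univ.filter (fun ω => ¬ E ω), P ω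
        ≤ (s : ℝ) * ∑ a : {x // x ∈ D}, p' a * g a ^ 2 := by
      rw [← hvar, Finset.mul_sum]
      calc ∑ ω ∈ Finset.univ.filter (fun ω => ¬ E ω), t0 ^ 2 * P ω
          ≤ ∑ ω ∈ Finset.univ.filter (fun ω => ¬ E ω), P ω * (∑ t, g (ω t)) ^ 2 := by
            apply Finset.sum_le_sum
            intro ω hω
            have hnE : ¬ E ω := (Finset.mem_filter.mp hω).2
            have habs : t0 ≤ |L - ∑ t, f (ω t)| := le_of_lt (not_le.mp hnE)
            have : t0 ^ 2 ≤ (∑ t, g (ω t)) ^ 2 := by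
              rw [← hdev ω, ← sq_abs (L - ∑ t, f (ω t))]
              exact pow_le_pow_left₀ (le_of_lt ht0pos) habs 2
            calc t0 ^ 2 * P ω ≤ (∑ t, g (ω t)) ^ 2 * P ω :=
                  mul_le_mul_of_nonneg_right this (hP0 ω)
              _ = P ω * (∑ t, g (ω t)) ^ 2 := mul_comm _ _
        _ ≤ ∑ ω : Fin s → {x // x ∈ D}, P ω * (∑ t, g (ω t)) ^ 2 := by
            apply Finset.sum_le_sum_of_subset_of_nonneg (Finset.filter_subset _ _)
            intro ω _ _
            exact mul_nonneg (hP0 ω) (sq_nonneg _)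
    have hvb : (s : ℝ) * ∑ a : {x // x ∈ D}, p' a * g a ^ 2 ≤ (L + 2 * Φ) ^ 2 / (4 * s) := by
      have h7 : L * (M - L) ≤ (L + 2 * Φ) ^ 2 / 4 := by
        nlinarith [sq_nonneg (L - 2 * Φ), mul_le_mul_of_nonneg_left hML hL0]
      calc (s : ℝ) * ∑ a : {x // x ∈ D}, p' a * g a ^ 2
          ≤ (s : ℝ) * (L * (M - L) / (s : ℝ) ^ 2) := by
            exact mul_le_mul_of_nonneg_left hpg2 (le_of_lt hspos)
        _ = L * (M - L) / s := by field_simp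
        _ ≤ ((L + 2 * Φ) ^ 2 / 4) / s := (div_le_div_iff_of_pos_right hspos).mpr h7
        _ = (L + 2 * Φ) ^ 2 / (4 * s) := by rw [div_div]
    -- conclude
    have hFle : ∑ ω ∈ Finset.univ.filter (fun ω => ¬ E ω), P ω ≤ 1 / 8 := by
      have h8 : t0 ^ 2 * ∑ ω ∈ Finset.univ.filter (fun ω => ¬ E ω), P ω
          ≤ (L + 2 * Φ) ^ 2 / (4 * s) := le_trans cheb hvb
      rw [ht0, mul_pow] at h8
      have hc2 : 0 < (L + 2 * Φ) ^ 2 := by positivity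
      set FF := ∑ ω ∈ Finset.univ.filter (fun ω => ¬ E ω), P ω with hFF
      have h8' : (ε ^ 2 * (L + 2 * Φ) ^ 2 * FF) * (4 * (s : ℝ)) ≤ (L + 2 * Φ) ^ 2 :=
        (le_div_iff₀ (by positivity)).mp h8
      have h10 : ε ^ 2 * FF * (4 * (s : ℝ)) ≤ 1 := by
        apply le_of_mul_le_mul_left _ hc2
        calc (L + 2 * Φ) ^ 2 * (ε ^ 2 * FF * (4 * (s : ℝ)))
            = (ε ^ 2 * (L + 2 * Φ) ^ 2 * FF) * (4 * (s : ℝ)) := by ring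
          _ ≤ (L + 2 * Φ) ^ 2 := h8'
          _ = (L + 2 * Φ) ^ 2 * 1 := by ring
      nlinarith [mul_nonneg hFnn (by linarith : (0:ℝ) ≤ (s : ℝ) * ε ^ 2 - 2)]
    linarith [hexp8, hsplit, hFle, hFnn]
  · -- degenerate case: all losses are zero
    have hL0' : L = 0 := le_antisymm (by linarith) hL0
    have hΦ0' : Φ = 0 := by linarith [not_lt.mp hcase]
    have hsum0 : ∑ e ∈ D, ℓ e = 0 := by rw [← hL]; exact hL0'
    have hℓD : ∀ e ∈ D, ℓ e = 0 := fun e he =>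
      (Finset.sum_eq_zero_iff_of_nonneg fun x _ => hℓ0 x).mp hsum0 e he
    have hall : ∀ ω : Fin s → {x // x ∈ D}, E ω := by
      intro ω
      have hS : ∑ t : Fin s, f (ω t) = 0 := by
        apply Finset.sum_eq_zero
        intro t _
        simp only [hf]
        rw [hℓD _ (ω t).2, mul_zero]
      simp only [hE, hS, hL0', hΦ0']
      simp
    rw [Finset.filter_true_of_mem (fun ω _ => hall ω)]
    rw [htot]
    have := Real.exp_pos (-1)
    linarith
end
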